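/- Let n ≥ 1, let F be the free ℤ-module on the set of perfect matchings of {1,…,2n}, and let M be the quotient of F by the submodule generated by all elements m − m₁ − m₂, where m ranges over perfect matchings having a crossing pair of arcs {a,c},{b,d} (a<b<c<d) and m₁, m₂ are obtained from m by replacing these two arcs by {a,b},{c,d} and by {a,d},{b,c} respectively. Then for every perfect matching m of {1,…,2n} there exists a function c from noncrossing perfect matchings of {1,…,2n} to the natural numbers such that: (i) in M, the class of m equals the sum over noncrossing matchings u of c(u) times the class of u; (ii) c(u) = 0 unless u is reachable from m by a finite sequence of resolution steps; and (iii) the sum of all values c(u) is at least 1. -/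

import Mathlib

/-- A standard Young tableau of shape `(n,n)`: a filling of a `2 × n` array with the
integers `1, …, 2n`, each used exactly once, strictly increasing along rows and columns. -/
structure SYT (n : ℕ) where
  entry : Fin 2 → Fin n → ℕ
  mem_range : ∀ i j, entry i j ∈ Finset.Icc 1 (2 * n)
  inj : Function.Injective (fun p : Fin 2 × Fin n => entry p.1 p.2)
  surj : ∀ k ∈ Finset.Icc 1 (2 * n), ∃ i j, entry i j = k
  row_mono : ∀ i : Fin 2, StrictMono (entry i)
  col_lt : ∀ j : Fin n, entry 0 j < entry 1 j

/-- A perfect matching of `{1, …, 2n}`, with each arc recorded as an ordered pair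
`(min, max)`. -/
structure Matching (n : ℕ) where
  arcs : Finset (ℕ × ℕ)
  arc_lt : ∀ p ∈ arcs, p.1 < p.2
  arc_mem : ∀ p ∈ arcs, p.1 ∈ Finset.Icc 1 (2 * n) ∧ p.2 ∈ Finset.Icc 1 (2 * n)
  cover : ∀ k ∈ Finset.Icc 1 (2 * n), ∃! p : ℕ × ℕ, p ∈ arcs ∧ (k = p.1 ∨ k = p.2)

/-- Arcs `{a,c}` and `{b,d}` (each written `(min, max)`) cross when `a < b < c < d`. -/
def Crosses (p q : ℕ × ℕ) : Prop := p.1 < q.1 ∧ q.1 < p.2 ∧ p.2 < q.2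

/-- A matching is noncrossing when no two of its arcs cross. -/
def Noncrossing {n : ℕ} (m : Matching n) : Prop :=
  ∀ p ∈ m.arcs, ∀ q ∈ m.arcs, ¬ Crosses p q

/-- The set of arc-minima (smaller endpoints of the arcs) of a matching. -/
def arcMinima {n : ℕ} (m : Matching n) : Finset ℕ := m.arcs.image Prod.fst

/-- The set of entries of the first row of a tableau. -/
def firstRow {n : ℕ} (T : SYT n) : Finset ℕ := Finset.univ.image (T.entry 0)

/-- The arcs of the column matching of a tableau: the two entries of each column. -/
def columnArcs {n : ℕ} (T : SYT n) : Finset (ℕ × ℕ) :=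
  Finset.univ.image (fun j : Fin n => (T.entry 0 j, T.entry 1 j))

/-- `ResPair m m₁ m₂` : `m` has a crossing pair of arcs `{a,c}, {b,d}` (`a<b<c<d`),
`m₁` is obtained by replacing them with `{a,b}, {c,d}`, and `m₂` by replacing them
with `{a,d}, {b,c}`. -/
def ResPair {n : ℕ} (m m₁ m₂ : Matching n) : Prop :=
  ∃ a b c d : ℕ, a < b ∧ b < c ∧ c < d ∧ (a, c) ∈ m.arcs ∧ (b, d) ∈ m.arcs ∧
    m₁.arcs = (m.arcs \ {(a, c), (b, d)}) ∪ {(a, b), (c, d)} ∧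
    m₂.arcs = (m.arcs \ {(a, c), (b, d)}) ∪ {(a, d), (b, c)}

/-- A single resolution step. -/
def ResStep {n : ℕ} (m m' : Matching n) : Prop :=
  ∃ m₁ m₂ : Matching n, ResPair m m₁ m₂ ∧ (m' = m₁ ∨ m' = m₂)

/-- `w` is reachable from `m` by a finite (possibly empty) sequence of resolution steps. -/
def Reachable {n : ℕ} (m w : Matching n) : Prop := Relation.ReflTransGen ResStep m w

/-- Directed edge of the tableau graph: `T` is obtained from `S` by swapping `i` and
`i+1`, where `i` is in the bottom row of `S` and `i+1` is in the top row of `S`. -/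
def Edge {n : ℕ} (S T : SYT n) : Prop :=
  ∃ i : ℕ, (∃ j : Fin n, S.entry 1 j = i) ∧ (∃ j : Fin n, S.entry 0 j = i + 1) ∧
    ∀ p q, T.entry p q =
      if S.entry p q = i then i + 1 else if S.entry p q = i + 1 then i else S.entry p q

/-- The tableau-graph partial order: existence of a directed path. -/
def TabLE {n : ℕ} (S T : SYT n) : Prop := Relation.ReflTransGen Edge S T

/-- The submodule of relations defining `M` as a quotient of the free `ℤ`-module on
perfect matchings: it is spanned by the elements `m - m₁ - m₂` for all resolution
pairs. -/
noncomputable def resolutionRelations (n : ℕ) : Submodule ℤ (Matching n →₀ ℤ) :=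
  Submodule.span ℤ {f : Matching n →₀ ℤ | ∃ m m₁ m₂ : Matching n, ResPair m m₁ m₂ ∧
    f = Finsupp.single m 1 - Finsupp.single m₁ 1 - Finsupp.single m₂ 1}

/-!
Resolving a crossing strictly decreases the weight `∑ (i + 2n) j` over the arcs `(i, j)`,
so every sequence of resolutions terminates, and well-founded induction along resolution
steps expands each matching into noncrossing ones: a noncrossing matching is its own
expansion, and a crossing one is the sum of the expansions of its two resolutions.
-/

namespace Matching

variable {n : ℕ}

lemma mem_Icc_of_endpoint (m : Matching n) {p : ℕ × ℕ} (hp : p ∈ m.arcs) {k : ℕ}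
    (hk : k = p.1 ∨ k = p.2) : k ∈ Finset.Icc 1 (2 * n) := by
  rcases hk with rfl | rfl
  exacts [(m.arc_mem p hp).1, (m.arc_mem p hp).2]

lemma eq_of_endpoint (m : Matching n) {p q : ℕ × ℕ} (hp : p ∈ m.arcs) (hq : q ∈ m.arcs)
    {k : ℕ} (hkp : k = p.1 ∨ k = p.2) (hkq : k = q.1 ∨ k = q.2) : p = q :=
  (m.cover k (m.mem_Icc_of_endpoint hp hkp)).unique ⟨hp, hkp⟩ ⟨hq, hkq⟩

def rewire (m : Matching n) {p q e f : ℕ × ℕ} (hp : p ∈ m.arcs) (hq : q ∈ m.arcs)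
    (he : e.1 < e.2) (hf : f.1 < f.2)
    (hends : ∀ k, ((k = e.1 ∨ k = e.2) ∨ (k = f.1 ∨ k = f.2)) ↔
      ((k = p.1 ∨ k = p.2) ∨ (k = q.1 ∨ k = q.2)))
    (hdisj : ∀ k, (k = e.1 ∨ k = e.2) → ¬ (k = f.1 ∨ k = f.2)) : Matching n where
  arcs := (m.arcs \ {p, q}) ∪ {e, f}
  arc_lt r hr := by
    rcases Finset.mem_union.1 hr with hr | hr
    · exact m.arc_lt r (Finset.mem_sdiff.1 hr).1
    · rcases Finset.mem_insert.1 hr with rfl | hr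
      exacts [he, Finset.mem_singleton.1 hr ▸ hf]
  arc_mem r hr := by
    have hold : ∀ k, ((k = p.1 ∨ k = p.2) ∨ (k = q.1 ∨ k = q.2)) → k ∈ Finset.Icc 1 (2 * n) :=
      fun k hk => hk.elim (m.mem_Icc_of_endpoint hp) (m.mem_Icc_of_endpoint hq)
    rcases Finset.mem_union.1 hr with hr | hr
    · exact m.arc_mem r (Finset.mem_sdiff.1 hr).1
    · rcases Finset.mem_insert.1 hr with rfl | hr
      · exact ⟨hold _ ((hends _).1 (.inl (.inl rfl))), hold _ ((hends _).1 (.inl (.inr rfl)))⟩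
      · obtain rfl := Finset.mem_singleton.1 hr
        exact ⟨hold _ ((hends _).1 (.inr (.inl rfl))), hold _ ((hends _).1 (.inr (.inr rfl)))⟩
  cover k hk := by
    by_cases hnew : ∃ g ∈ ({e, f} : Finset (ℕ × ℕ)), k = g.1 ∨ k = g.2
    · obtain ⟨g, hg, hkg⟩ := hnew
      have hkpq : (k = p.1 ∨ k = p.2) ∨ (k = q.1 ∨ k = q.2) := by
        refine (hends k).1 ?_
        rcases Finset.mem_insert.1 hg with rfl | hg
        exacts [.inl hkg, .inr (Finset.mem_singleton.1 hg ▸ hkg)]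
      refine ⟨g, ⟨Finset.mem_union_right _ hg, hkg⟩, ?_⟩
      rintro r ⟨hr, hkr⟩
      rcases Finset.mem_union.1 hr with hr | hr
      · obtain ⟨hr, hrpq⟩ := Finset.mem_sdiff.1 hr
        refine absurd ?_ hrpq
        rcases hkpq with hkp | hkq
        · simp [m.eq_of_endpoint hr hp hkr hkp]
        · simp [m.eq_of_endpoint hr hq hkr hkq]
      · simp only [Finset.mem_insert, Finset.mem_singleton] at hg hr
        rcases hg with rfl | rfl <;> rcases hr with rfl | rfl
        exacts [rfl, (hdisj k hkg hkr).elim, (hdisj k hkr hkg).elim, rfl]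
    · obtain ⟨r, ⟨hr, hkr⟩, hr_unique⟩ := m.cover k hk
      have hrpq : r ∉ ({p, q} : Finset (ℕ × ℕ)) := by
        intro hrpq
        refine hnew ?_
        have : (k = e.1 ∨ k = e.2) ∨ (k = f.1 ∨ k = f.2) := by
          refine (hends k).2 ?_
          rcases Finset.mem_insert.1 hrpq with rfl | hrq
          exacts [.inl hkr, .inr (Finset.mem_singleton.1 hrq ▸ hkr)]
        simpa using this
      refine ⟨r, ⟨Finset.mem_union_left _ (Finset.mem_sdiff.2 ⟨hr, hrpq⟩), hkr⟩, ?_⟩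
      rintro s ⟨hs, hks⟩
      rcases Finset.mem_union.1 hs with hs | hs
      · exact hr_unique s ⟨(Finset.mem_sdiff.1 hs).1, hks⟩
      · exact (hnew ⟨s, hs, hks⟩).elim

lemma exists_resPair_of_not_noncrossing {m : Matching n} (hm : ¬ Noncrossing m) :
    ∃ m₁ m₂ : Matching n, ResPair m m₁ m₂ := by
  simp only [Noncrossing, not_forall, not_not] at hm
  obtain ⟨⟨a, c⟩, hac, ⟨b, d⟩, hbd, hab, hbc, hcd⟩ := hm
  dsimp only at hab hbc hcd
  refine ⟨m.rewire (e := (a, b)) (f := (c, d)) hac hbd ?_ ?_ ?_ ?_,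
    m.rewire (e := (a, d)) (f := (b, c)) hac hbd ?_ ?_ ?_ ?_,
    a, b, c, d, hab, hbc, hcd, hac, hbd, rfl, rfl⟩ <;> dsimp only <;> omega

end Matching


section resolutionWeight

variable {n : ℕ}

def arcWeight (K : ℕ) (p : ℕ × ℕ) : ℕ := (p.1 + K) * p.2

/-- For `K ≥ 2n`, resolving a crossing `(a, c), (b, d)` decreases the total `arcWeight K`:
by `(c - b) (a + K - d)` towards `(a, b), (c, d)` and by `(b - a) (d - c)` towards
`(a, d), (b, c)`. -/
def resolutionWeight (m : Matching n) : ℕ := ∑ p ∈ m.arcs, arcWeight (2 * n) p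

lemma arcWeight_sideBySide_lt {K a b c d : ℕ} (hbc : b < c) (hd : d < a + K) :
    arcWeight K (a, b) + arcWeight K (c, d) < arcWeight K (a, c) + arcWeight K (b, d) := by
  simp only [arcWeight]
  nlinarith [Nat.mul_lt_mul_of_pos_left hbc (Nat.sub_pos_of_lt hd)]

lemma arcWeight_nested_lt {K a b c d : ℕ} (hab : a < b) (hcd : c < d) :
    arcWeight K (a, d) + arcWeight K (b, c) < arcWeight K (a, c) + arcWeight K (b, d) := by
  simp only [arcWeight]
  nlinarith [Nat.mul_lt_mul_of_pos_left hcd (Nat.sub_pos_of_lt hab)]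

lemma sum_arcs_lt_of_arcs_eq {g : ℕ × ℕ → ℕ} {m m' : Matching n} {p q e f : ℕ × ℕ}
    (hp : p ∈ m.arcs) (hq : q ∈ m.arcs) (hpq : p ≠ q)
    (harcs : m'.arcs = (m.arcs \ {p, q}) ∪ {e, f}) (hg : g e + g f < g p + g q) :
    ∑ r ∈ m'.arcs, g r < ∑ r ∈ m.arcs, g r := by
  have hef : ∑ r ∈ ({e, f} : Finset (ℕ × ℕ)), g r ≤ g e + g f := by
    by_cases h : e = f
    · simp [h]
    · rw [Finset.sum_pair h]
  have hpq_sub : ({p, q} : Finset (ℕ × ℕ)) ⊆ m.arcs := Finset.insert_subset hp (by simpa)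
  calc ∑ r ∈ m'.arcs, g r
      ≤ ∑ r ∈ m.arcs \ {p, q}, g r + ∑ r ∈ ({e, f} : Finset (ℕ × ℕ)), g r := by
        rw [harcs, ← Finset.sum_union_inter]
        exact le_self_add
    _ < ∑ r ∈ m.arcs \ {p, q}, g r + (g p + g q) := by omega
    _ = ∑ r ∈ m.arcs, g r := by rw [← Finset.sum_pair hpq, Finset.sum_sdiff hpq_sub]

lemma resolutionWeight_lt_of_resPair {m m₁ m₂ : Matching n} (h : ResPair m m₁ m₂) :
    resolutionWeight m₁ < resolutionWeight m ∧ resolutionWeight m₂ < resolutionWeight m := by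
  obtain ⟨a, b, c, d, hab, hbc, hcd, hac, hbd, h₁, h₂⟩ := h
  have ha : 1 ≤ a := (Finset.mem_Icc.1 (m.arc_mem _ hac).1).1
  have hd : d ≤ 2 * n := (Finset.mem_Icc.1 (m.arc_mem _ hbd).2).2
  have hne : (a, c) ≠ (b, d) := by simp [hab.ne]
  exact ⟨sum_arcs_lt_of_arcs_eq hac hbd hne h₁ (arcWeight_sideBySide_lt hbc (by omega)),
    sum_arcs_lt_of_arcs_eq hac hbd hne h₂ (arcWeight_nested_lt hab hcd)⟩

lemma resolutionWeight_lt_of_resStep {m m' : Matching n} (h : ResStep m m') :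
    resolutionWeight m' < resolutionWeight m := by
  obtain ⟨m₁, m₂, hpair, rfl | rfl⟩ := h
  exacts [(resolutionWeight_lt_of_resPair hpair).1, (resolutionWeight_lt_of_resPair hpair).2]

lemma wellFounded_flip_resStep : WellFounded (flip (@ResStep n)) :=
  Subrelation.wf (fun h => resolutionWeight_lt_of_resStep h) (measure resolutionWeight).wf

end resolutionWeight

lemma Finsupp.sum_support_natCast_smul_single_add {α : Type*} (c₁ c₂ : α →₀ ℕ) :
    ∑ u ∈ (c₁ + c₂).support, ((c₁ + c₂) u : ℤ) • Finsupp.single u (1 : ℤ) =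
      ∑ u ∈ c₁.support, (c₁ u : ℤ) • Finsupp.single u (1 : ℤ) +
        ∑ u ∈ c₂.support, (c₂ u : ℤ) • Finsupp.single u (1 : ℤ) := by
  classical
  exact Finsupp.sum_add_index' (h := fun u (k : ℕ) => (k : ℤ) • Finsupp.single u (1 : ℤ))
    (fun _ => by rw [Nat.cast_zero, zero_smul]) (fun _ _ _ => by rw [Nat.cast_add, add_smul])

section expansion

variable {n : ℕ}

def IsNoncrossingExpansion (m : Matching n) (c : Matching n →₀ ℕ) : Prop :=
  (∀ u ∈ c.support, Noncrossing u) ∧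
    (∀ u : Matching n, ¬ Reachable m u → c u = 0) ∧
    1 ≤ ∑ u ∈ c.support, c u ∧
    (Finsupp.single m (1 : ℤ) - ∑ u ∈ c.support, (c u : ℤ) • Finsupp.single u (1 : ℤ))
      ∈ resolutionRelations n

lemma IsNoncrossingExpansion.single {m : Matching n} (hm : Noncrossing m) :
    IsNoncrossingExpansion m (Finsupp.single m 1) := by
  classical
  refine ⟨?_, fun u hu => ?_, by simp, by simp⟩
  · intro u hu
    rwa [Finset.mem_singleton.1 (Finsupp.support_single_subset hu)]
  · have : m ≠ u := fun h => hu (h ▸ .refl)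
    simp [this]

lemma IsNoncrossingExpansion.add {m m₁ m₂ : Matching n} {c₁ c₂ : Matching n →₀ ℕ}
    (h : ResPair m m₁ m₂) (h₁ : IsNoncrossingExpansion m₁ c₁)
    (h₂ : IsNoncrossingExpansion m₂ c₂) : IsNoncrossingExpansion m (c₁ + c₂) := by
  classical
  obtain ⟨hnc₁, hreach₁, hsum₁, hrel₁⟩ := h₁
  obtain ⟨hnc₂, hreach₂, hsum₂, hrel₂⟩ := h₂
  refine ⟨fun u hu => ?_, fun u hu => ?_, ?_, ?_⟩
  · rcases Finset.mem_union.1 (Finsupp.support_add hu) with hu | hu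
    exacts [hnc₁ u hu, hnc₂ u hu]
  · have hstep₁ : ResStep m m₁ := ⟨m₁, m₂, h, .inl rfl⟩
    have hstep₂ : ResStep m m₂ := ⟨m₁, m₂, h, .inr rfl⟩
    simp [hreach₁ u (hu ∘ .head hstep₁), hreach₂ u (hu ∘ .head hstep₂)]
  · rw [← Finsupp.degree_apply, map_add]
    exact le_add_right hsum₁
  · have hgen : Finsupp.single m (1 : ℤ) - Finsupp.single m₁ 1 - Finsupp.single m₂ 1
        ∈ resolutionRelations n :=
      Submodule.subset_span ⟨m, m₁, m₂, h, rfl⟩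
    convert add_mem (add_mem hgen hrel₁) hrel₂ using 1
    rw [Finsupp.sum_support_natCast_smul_single_add]
    abel

end expansion

theorem stmt6_general (n : ℕ) (m : Matching n) :
    ∃ c : Matching n →₀ ℕ, (∀ u ∈ c.support, Noncrossing u) ∧
      (∀ u : Matching n, ¬ Reachable m u → c u = 0) ∧
      1 ≤ ∑ u ∈ c.support, c u ∧
      (Finsupp.single m (1 : ℤ) - ∑ u ∈ c.support, (c u : ℤ) • Finsupp.single u (1 : ℤ))
        ∈ resolutionRelations n := by
  induction m using wellFounded_flip_resStep.induction with
  | _ m ih =>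
  by_cases hm : Noncrossing m
  · exact ⟨_, IsNoncrossingExpansion.single hm⟩
  obtain ⟨m₁, m₂, h⟩ := m.exists_resPair_of_not_noncrossing hm
  obtain ⟨c₁, hc₁⟩ := ih m₁ ⟨m₁, m₂, h, .inl rfl⟩
  obtain ⟨c₂, hc₂⟩ := ih m₂ ⟨m₁, m₂, h, .inr rfl⟩
  exact ⟨c₁ + c₂, IsNoncrossingExpansion.add h hc₁ hc₂⟩

/-- In `M = F / resolutionRelations n`, the class of any matching `m` is a nonnegative
integer combination of classes of noncrossing matchings, supported on matchings
reachable from `m`, with total coefficient sum at least `1`. -/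
theorem stmt6 (n : ℕ) (hn : 1 ≤ n) (m : Matching n) :
    ∃ c : Matching n →₀ ℕ, (∀ u ∈ c.support, Noncrossing u) ∧
      (∀ u : Matching n, ¬ Reachable m u → c u = 0) ∧
      1 ≤ ∑ u ∈ c.support, c u ∧
      (Finsupp.single m (1 : ℤ) - ∑ u ∈ c.support, (c u : ℤ) • Finsupp.single u (1 : ℤ))
        ∈ resolutionRelations n :=
  stmt6_general n m
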